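/- Let (Γ,w) be a stable weighted graph of genus g ≥ 2 and d an integer. Then the sets B_d(Γ,w) and B̄_d(Γ,w) are finite, the set Δ^d of equivalence classes of multidegrees of total degree d has the same (finite) cardinality as the degree class group Δ, and #B_d(Γ,w) ≤ #Δ ≤ #B̄_d(Γ,w). -/

import Mathlib

open Finset

noncomputable section
open scoped Classical

variable {V : Type} [Fintype V] [DecidableEq V]

/-- The simple graph underlying a multigraph with multiplicity function `k`:
`u` and `v` are adjacent iff `u ≠ v` and some edge joins them. -/
def graphOf (k : V → V → ℕ) : SimpleGraph V where
  Adj u v := u ≠ v ∧ (0 < k u v ∨ 0 < k v u)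
  symm := ⟨fun u v h => ⟨h.1.symm, h.2.symm⟩⟩
  loopless := ⟨fun v h => h.1 rfl⟩

/-- The number of edges of a multigraph: loops plus half the ordered count. -/
def numEdges (k : V → V → ℕ) : ℕ :=
  (∑ v, k v v) + (∑ u, ∑ v ∈ Finset.univ.erase u, k u v) / 2

/-- The genus of a weighted graph: `∑ w(v) + b₁`, with `b₁ = #E - #V + 1`. -/
def genus (k : V → V → ℕ) (w : V → ℕ) : ℤ :=
  (∑ v, (w v : ℤ)) + ((numEdges k : ℤ) - (Fintype.card V : ℤ) + 1)

/-- Stability: connected, and each weight-zero vertex has valency at least 3. -/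
def IsStable (k : V → V → ℕ) (w : V → ℕ) : Prop :=
  (graphOf k).Connected ∧
    ∀ v, w v = 0 → 3 ≤ 2 * k v v + ∑ u ∈ Finset.univ.erase v, k u v

/-- `δ_A`: the number of edges joining `A` to its complement. -/
def deltaA (k : V → V → ℕ) (A : Finset V) : ℤ :=
  ∑ u ∈ A, ∑ v ∈ Aᶜ, (k u v : ℤ)

/-- `w_A = Σ_{v∈A} (2w(v) − 2 + 2k(v,v) + Σ_{u≠v} k(u,v))`. -/
def wA (k : V → V → ℕ) (w : V → ℕ) (A : Finset V) : ℤ :=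
  ∑ v ∈ A, (2 * (w v : ℤ) - 2 + 2 * (k v v : ℤ) + ∑ u ∈ Finset.univ.erase v, (k u v : ℤ))

/-- `d_A`: the total degree of a multidegree on the subset `A`. -/
def degA (d : V → ℤ) (A : Finset V) : ℤ := ∑ v ∈ A, d v

/-- `m_A(d) = d·w_A/(2g−2) − δ_A/2 ∈ ℚ`. -/
def mA (k : V → V → ℕ) (w : V → ℕ) (D : ℤ) (A : Finset V) : ℚ :=
  (D : ℚ) * (wA k w A : ℚ) / ((2 * genus k w - 2 : ℤ) : ℚ) - (deltaA k A : ℚ) / 2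

/-- A balanced multidegree of total degree `D`. -/
def IsBalanced (k : V → V → ℕ) (w : V → ℕ) (D : ℤ) (d : V → ℤ) : Prop :=
  degA d Finset.univ = D ∧ ∀ A : Finset V, mA k w D A ≤ (degA d A : ℚ)

/-- A strictly balanced multidegree of total degree `D`. -/
def IsStrictlyBalanced (k : V → V → ℕ) (w : V → ℕ) (D : ℤ) (d : V → ℤ) : Prop :=
  IsBalanced k w D d ∧
    ∀ A : Finset V, A ≠ ∅ → A ≠ Finset.univ → mA k w D A < (degA d A : ℚ)

/-- `(Γ,w)` is `d`-general if every balanced multidegree of total degree `d`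
is strictly balanced. -/
def IsDGeneral (k : V → V → ℕ) (w : V → ℕ) (D : ℤ) : Prop :=
  ∀ d : V → ℤ, IsBalanced k w D d → IsStrictlyBalanced k w D d

/-- The generator `c_v` of the lattice `Λ`. -/
def cvec (k : V → V → ℕ) (v : V) : V → ℤ := fun u =>
  if u = v then -(∑ x ∈ Finset.univ.erase v, (k x v : ℤ)) else (k u v : ℤ)

/-- The lattice `Λ ⊆ ℤ^V` generated by the `c_v`. -/
def Lambda (k : V → V → ℕ) : AddSubgroup (V → ℤ) :=
  AddSubgroup.closure (Set.range (cvec k))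

/-- The total-degree homomorphism `ℤ^V → ℤ`. -/
def sumHom (V : Type) [Fintype V] : (V → ℤ) →+ ℤ :=
  { toFun := fun d => ∑ v, d v
    map_zero' := by simp
    map_add' := fun a b => by simp [Finset.sum_add_distrib] }

/-- `Z = {d ∈ ℤ^V : Σ_v d(v) = 0}`. -/
def Zsub (V : Type) [Fintype V] : AddSubgroup (V → ℤ) := (sumHom V).ker

/-- Remove the edge(s) joining `a` and `b` from the multigraph. -/
def removeEdge (k : V → V → ℕ) (a b : V) : V → V → ℕ := fun u v =>
  if (u = a ∧ v = b) ∨ (u = b ∧ v = a) then 0 else k u v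

/-- `a`–`b` is a bridge: a single non-loop edge whose removal disconnects the graph. -/
def IsBridge (k : V → V → ℕ) (a b : V) : Prop :=
  a ≠ b ∧ k a b = 1 ∧ ¬ (graphOf (removeEdge k a b)).Connected

/-- `A` induces a connected sub-multigraph. -/
def IsConnectedSubset (k : V → V → ℕ) (A : Finset V) : Prop :=
  ((graphOf k).induce (A : Set V)).Connected

/-- The equivalence relation `≈` on `V` generated by bridges. -/
def contractSetoid (k : V → V → ℕ) : Setoid V :=
  ⟨Relation.EqvGen (fun u v => IsBridge k u v), Relation.EqvGen.is_equivalence _⟩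

/-- The vertex set `V² = V/≈` of the contracted graph `Γ²`. -/
def V2 (k : V → V → ℕ) : Type := Quotient (contractSetoid k)

instance (k : V → V → ℕ) : Finite (V2 k) := Quotient.finite _

instance (k : V → V → ℕ) : Fintype (V2 k) := Fintype.ofFinite _

/-- The fiber of the quotient map `φ : V → V²` over a class `c`. -/
def fiber (k : V → V → ℕ) (c : V2 k) : Finset V :=
  Finset.univ.filter (fun v => Quotient.mk (contractSetoid k) v = c)

/-- The multiplicity function `k²` of the contracted graph `Γ²`. -/
def k2 (k : V → V → ℕ) : V2 k → V2 k → ℕ := fun c c' =>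
  if c = c' then
    (∑ v ∈ fiber k c, k v v) +
      (∑ u ∈ fiber k c, ∑ v ∈ (fiber k c).erase u,
        if IsBridge k u v then 0 else k u v) / 2
  else ∑ u ∈ fiber k c, ∑ v ∈ fiber k c', k u v

/-- The weight function `w²` of the contracted weighted graph `(Γ²,w²)`. -/
def w2 (k : V → V → ℕ) (w : V → ℕ) : V2 k → ℕ := fun c => ∑ v ∈ fiber k c, w v

/-- The pushforward `α(d)` of a multidegree to the contracted graph. -/
def alphaMap (k : V → V → ℕ) (d : V → ℤ) : V2 k → ℤ := fun c => ∑ v ∈ fiber k c, d v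

/-- The setoid on multidegrees of total degree `D`: two are equivalent if their
difference lies in `Λ`; the quotient is `Δ^d`. -/
def degSetoid (k : V → V → ℕ) (D : ℤ) : Setoid {d : V → ℤ // (∑ v, d v) = D} :=
  ⟨fun a b => (a : V → ℤ) - (b : V → ℤ) ∈ Lambda k, by
    constructor
    · intro a; simpa using (Lambda k).zero_mem
    · intro a b h; have h2 := (Lambda k).neg_mem h; rwa [neg_sub] at h2
    · intro a b c h1 h2
      have h3 := (Lambda k).add_mem h1 h2
      rwa [sub_add_sub_cancel] at h3⟩

/-- Number of edges of the sub-multigraph induced on `A`. -/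
def numEdgesIn (k : V → V → ℕ) (A : Finset V) : ℕ :=
  (∑ v ∈ A, k v v) + (∑ u ∈ A, ∑ v ∈ A.erase u, k u v) / 2

/-- Blow-up of a multigraph at the single bridge `a`–`b`: one exceptional
vertex is inserted in the middle of the bridge. -/
def blowK (k : V → V → ℕ) (a b : V) : (V ⊕ Unit) → (V ⊕ Unit) → ℕ
  | Sum.inl u, Sum.inl v => if (u = a ∧ v = b) ∨ (u = b ∧ v = a) then 0 else k u v
  | Sum.inl u, Sum.inr _ => if u = a ∨ u = b then 1 else 0
  | Sum.inr _, Sum.inl v => if v = a ∨ v = b then 1 else 0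
  | Sum.inr _, Sum.inr _ => 0

/-- Weight function of the blow-up at one bridge: exceptional vertex has weight 0. -/
def blowW (w : V → ℕ) : V ⊕ Unit → ℕ
  | Sum.inl v => w v
  | Sum.inr _ => 0

/-- Blow-up of a multigraph at a set `S` of bridges (given as ordered pairs):
one exceptional vertex is inserted in the middle of each bridge of `S`. -/
def blowKS (k : V → V → ℕ) (S : Finset (V × V)) :
    (V ⊕ {p : V × V // p ∈ S}) → (V ⊕ {p : V × V // p ∈ S}) → ℕ
  | Sum.inl u, Sum.inl v => if (u, v) ∈ S ∨ (v, u) ∈ S then 0 else k u v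
  | Sum.inl u, Sum.inr e => if u = e.1.1 ∨ u = e.1.2 then 1 else 0
  | Sum.inr e, Sum.inl v => if v = e.1.1 ∨ v = e.1.2 then 1 else 0
  | Sum.inr _, Sum.inr _ => 0

/-- Weight function of the blow-up at a set of bridges. -/
def blowWS (w : V → ℕ) (S : Finset (V × V)) : (V ⊕ {p : V × V // p ∈ S}) → ℕ
  | Sum.inl v => w v
  | Sum.inr _ => 0

/-- Strictly balanced multidegree of total degree `D` on the blow-up `Γ̂_S`:
balanced (with degree 1 on each exceptional vertex), and the inequality is
strict for every proper nonempty `A` such that some edge between `A` and its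
complement has no exceptional endpoint. -/
def IsStrictlyBalancedBlowS (k : V → V → ℕ) (w : V → ℕ) (S : Finset (V × V)) (D : ℤ)
    (dh : (V ⊕ {p : V × V // p ∈ S}) → ℤ) : Prop :=
  IsBalanced (blowKS k S) (blowWS w S) D dh ∧
    (∀ e : {p : V × V // p ∈ S}, dh (Sum.inr e) = 1) ∧
    ∀ A : Finset (V ⊕ {p : V × V // p ∈ S}), A ≠ ∅ → A ≠ Finset.univ →
      (∃ u v : V, Sum.inl u ∈ A ∧ Sum.inl v ∉ A ∧ 0 < blowKS k S (Sum.inl u) (Sum.inl v)) →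
      mA (blowKS k S) (blowWS w S) D A < (degA dh A : ℚ)

/-- Multiplicity function of the vine graph: two vertices joined by `δ` edges,
no loops. -/
def vineK (δ : ℕ) : Fin 2 → Fin 2 → ℕ := fun u v => if u = v then 0 else δ

/-- Weight function of the vine graph with weights `g₁, g₂`. -/
def vineW (g1 g2 : ℕ) : Fin 2 → ℕ := fun v => if v = 0 then g1 else g2

/-- The data of a stable vine graph of genus `g` with weights `g₁, g₂` and `δ` edges. -/
def StableVine (g : ℤ) (g1 g2 δ : ℕ) : Prop :=
  2 ≤ δ ∧ ((g1 = 0 ∨ g2 = 0) → 3 ≤ δ) ∧ (g1 : ℤ) + (g2 : ℤ) + (δ : ℤ) - 1 = g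

end

/-!
The map `laplacian n = ∑ₐ n(a) • c_a` has image `Λ`, and its sum over a set `B` is
`-½ ∑ k(u,v) (1_B(u) - 1_B(v)) (n(u) - n(v))`, which is `-δ_B` for `n = 1_B`.

Every class contains a balanced multidegree: if `d` is not balanced, let `A` maximise the integer
excess `2(2g-2)(m_A - d_A)`, ties broken by size, and subtract `laplacian 1_A`, which moves one
unit of degree into `A` across each edge leaving it. By submodularity of the cut function every
set then comes strictly before the old `A` in this order, so the process stops.

A strictly balanced `d'` is the only balanced multidegree in its class: if `d - d' = laplacian n`
and `A` is the set where `n` is maximal, then `d_A ≤ d'_A - δ_A`, and as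
`m_A + m_{Aᶜ} = D - δ_A` this contradicts strict balancedness of `d'` at `Aᶜ`.

Hence `B_D ↪ Δ^D ↠ B̄_D`, where `B̄_D` is finite because `A = {v}` and `A = {v}ᶜ` bound `d(v)`;
translation by a fixed multidegree identifies `Δ^D` with `Δ`, which is therefore finite as well.
-/

section Laplacian

variable {V : Type} [Fintype V] {k : V → V → ℕ}

lemma sum_sum_mul_swap (hsym : ∀ u v, k u v = k v u) (f : V → V → ℤ) :
    ∑ u, ∑ v, (k u v : ℤ) * f u v = ∑ u, ∑ v, (k u v : ℤ) * f v u := by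
  rw [sum_comm]
  simp_rw [hsym]

lemma two_mul_sum_sum_mul (hsym : ∀ u v, k u v = k v u) (f : V → V → ℤ) :
    2 * ∑ u, ∑ v, (k u v : ℤ) * f u v = ∑ u, ∑ v, (k u v : ℤ) * (f u v + f v u) := by
  rw [two_mul]
  conv_lhs => arg 2; rw [sum_sum_mul_swap hsym]
  simp only [← sum_add_distrib, mul_add]

variable (k) in
def dirichletForm (x y : V → ℤ) : ℤ :=
  ∑ u, ∑ v, (k u v : ℤ) * (x u - x v) * (y u - y v)

variable [DecidableEq V]

variable (k) in
def laplacian (n : V → ℤ) : V → ℤ := ∑ a, n a • cvec k a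

variable (k) in
lemma laplacian_mem_Lambda (n : V → ℤ) : laplacian k n ∈ Lambda k :=
  AddSubgroup.sum_mem _ fun a _ =>
    AddSubgroup.zsmul_mem _ (AddSubgroup.subset_closure (Set.mem_range_self a)) _

variable (k) in
lemma exists_laplacian_eq_of_mem_Lambda {z : V → ℤ} (hz : z ∈ Lambda k) :
    ∃ n, laplacian k n = z := by
  rw [Lambda, ← Submodule.span_int_eq_addSubgroupClosure] at hz
  exact (Submodule.mem_span_range_iff_exists_fun ℤ).mp hz

lemma sum_cvec (a : V) : ∑ u, cvec k a u = 0 := by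
  rw [← add_sum_erase _ _ (mem_univ a), cvec, if_pos rfl, neg_add_eq_zero]
  exact sum_congr rfl fun u hu => by rw [cvec, if_neg (ne_of_mem_erase hu)]

variable (k) in
lemma Lambda_le_Zsub : Lambda k ≤ Zsub V := by
  refine (AddSubgroup.closure_le _).mpr ?_
  rintro _ ⟨a, rfl⟩
  exact sum_cvec a

lemma sum_laplacian (n : V → ℤ) : ∑ u, laplacian k n u = 0 :=
  Lambda_le_Zsub k (laplacian_mem_Lambda k n)

lemma laplacian_apply (hsym : ∀ u v, k u v = k v u) (n : V → ℤ) (u : V) :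
    laplacian k n u = ∑ a, (k u a : ℤ) * (n a - n u) := by
  simp only [laplacian, Finset.sum_apply, Pi.smul_apply, smul_eq_mul]
  rw [← add_sum_erase _ _ (mem_univ u), ← add_sum_erase _ _ (mem_univ u), cvec, if_pos rfl,
    sub_self, mul_zero, zero_add, mul_neg, mul_sum]
  simp only [mul_sub, sum_sub_distrib, hsym _ u]
  rw [neg_add_eq_sub]
  congr 1
  · refine sum_congr rfl fun a ha => ?_
    rw [cvec, if_neg (ne_of_mem_erase ha).symm, hsym, mul_comm]
  · exact sum_congr rfl fun a _ => mul_comm _ _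

lemma two_mul_sum_laplacian (hsym : ∀ u v, k u v = k v u) (n : V → ℤ) (B : Finset V) :
    2 * ∑ u ∈ B, laplacian k n u = -dirichletForm k ((B : Set V).indicator 1) n := by
  have h : ∑ u ∈ B, laplacian k n u =
      ∑ u, ∑ v, (k u v : ℤ) * ((B : Set V).indicator 1 u * (n v - n u)) := by
    rw [← sum_indicator_subset _ (subset_univ B)]
    refine sum_congr rfl fun u _ => ?_
    simp only [Set.indicator_apply, mem_coe]
    split_ifs
    · simp [laplacian_apply hsym]
    · simp
  rw [h, two_mul_sum_sum_mul hsym, dirichletForm, ← sum_neg_distrib]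
  refine sum_congr rfl fun u _ => ?_
  rw [← sum_neg_distrib]
  exact sum_congr rfl fun v _ => by ring

lemma two_mul_deltaA (hsym : ∀ u v, k u v = k v u) (X : Finset V) :
    2 * deltaA k X = dirichletForm k ((X : Set V).indicator 1) ((X : Set V).indicator 1) := by
  have h : deltaA k X = -∑ u ∈ X, laplacian k ((X : Set V).indicator 1) u := by
    rw [deltaA, ← sum_neg_distrib]
    refine sum_congr rfl fun u hu => ?_
    rw [laplacian_apply hsym, ← sum_add_sum_compl X]
    conv_rhs => rw [sum_eq_zero fun a ha => by simp [ha, hu], zero_add, ← sum_neg_distrib]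
    exact sum_congr rfl fun a ha => by simp [mem_compl.mp ha, hu]
  rw [h, mul_neg, two_mul_sum_laplacian hsym, neg_neg]

end Laplacian

section Cuts

variable {V : Type} [Fintype V] [DecidableEq V] {k : V → V → ℕ}

lemma even_sum_sum_erase (hsym : ∀ u v, k u v = k v u) :
    Even (∑ u, ∑ v ∈ univ.erase u, k u v) := by
  rw [← sum_finset_product' univ.offDiag _ _ (by simp [eq_comm]),
    ← ZMod.natCast_eq_zero_iff_even, Nat.cast_sum]
  refine sum_involution (fun p _ => p.swap) (fun p _ => ?_) (fun p hp _ h => ?_)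
    (fun p hp => by simpa [eq_comm] using hp) (fun p _ => p.swap_swap)
  · simp [hsym p.2 p.1, CharTwo.add_self_eq_zero]
  · exact (mem_offDiag.mp hp).2.2 (congrArg Prod.fst h).symm

lemma wA_univ (hsym : ∀ u v, k u v = k v u) (w : V → ℕ) :
    wA k w univ = 2 * genus k w - 2 := by
  have h := Nat.two_mul_div_two_of_even (even_sum_sum_erase hsym)
  have hswap : ∑ v, ∑ u ∈ univ.erase v, (k u v : ℤ) = ∑ u, ∑ v ∈ univ.erase u, (k u v : ℤ) := by
    simp_rw [hsym]
  simp only [wA, genus, numEdges, sum_add_distrib, sum_sub_distrib, ← mul_sum, hswap]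
  zify at h
  push_cast [h]
  simp only [sum_const, card_univ, nsmul_eq_mul]
  linarith

variable (k) in
lemma deltaA_univ : deltaA k univ = 0 := by simp [deltaA]

lemma deltaA_compl (hsym : ∀ u v, k u v = k v u) (A : Finset V) : deltaA k Aᶜ = deltaA k A := by
  rw [deltaA, deltaA, compl_compl, sum_comm]
  simp_rw [hsym]

lemma deltaA_pos (hsym : ∀ u v, k u v = k v u) (hconn : (graphOf k).Connected) {A : Finset V}
    (hA : A.Nonempty) (hA' : A ≠ univ) : 0 < deltaA k A := by
  obtain ⟨a, ha⟩ := hA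
  obtain ⟨b, hb⟩ : ∃ b, b ∉ A := by simpa [eq_univ_iff_forall] using hA'
  obtain ⟨e, -, he₁, he₂⟩ :=
    (hconn.preconnected a b).some.exists_boundary_dart (A : Set V) ha hb
  have hk : 0 < k e.fst e.snd := e.adj.2.elim id fun h => hsym e.fst e.snd ▸ h
  refine sum_pos' (fun u _ => sum_nonneg fun v _ => by positivity) ⟨e.fst, he₁, ?_⟩
  exact sum_pos' (fun v _ => by positivity) ⟨e.snd, mem_compl.mpr he₂, by exact_mod_cast hk⟩

lemma deltaA_union_add_deltaA_inter_add_sum_laplacian_le (hsym : ∀ u v, k u v = k v u)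
    (A B : Finset V) :
    deltaA k (A ∪ B) + deltaA k (A ∩ B) + 2 * ∑ u ∈ B, laplacian k ((A : Set V).indicator 1) u ≤
      deltaA k A + deltaA k B := by
  suffices h :
      dirichletForm k ((↑(A ∪ B) : Set V).indicator 1) ((↑(A ∪ B) : Set V).indicator 1) +
        dirichletForm k ((↑(A ∩ B) : Set V).indicator 1) ((↑(A ∩ B) : Set V).indicator 1) -
        2 * dirichletForm k ((B : Set V).indicator 1) ((A : Set V).indicator 1) -
        dirichletForm k ((A : Set V).indicator 1) ((A : Set V).indicator 1) -
        dirichletForm k ((B : Set V).indicator 1) ((B : Set V).indicator 1) ≤ 0 by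
    have := two_mul_sum_laplacian hsym ((A : Set V).indicator 1) B
    simp only [← two_mul_deltaA hsym] at h
    linarith
  simp only [dirichletForm, mul_sum, ← sum_sub_distrib, ← sum_add_distrib]
  refine sum_nonpos fun u _ => sum_nonpos fun v _ => ?_
  by_cases hua : u ∈ A <;> by_cases hub : u ∈ B <;> by_cases hva : v ∈ A <;>
    by_cases hvb : v ∈ B <;> simp [hua, hub, hva, hvb] <;> omega

lemma sum_laplacian_le_neg_deltaA (hsym : ∀ u v, k u v = k v u) {n : V → ℤ} {A : Finset V}
    (hA : ∀ u ∈ A, ∀ v ∉ A, n v < n u) : ∑ u ∈ A, laplacian k n u ≤ -deltaA k A := by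
  suffices h : dirichletForm k ((A : Set V).indicator 1) ((A : Set V).indicator 1) ≤
      dirichletForm k ((A : Set V).indicator 1) n by
    have := two_mul_sum_laplacian hsym n A
    rw [← two_mul_deltaA hsym] at h
    linarith
  refine sum_le_sum fun u _ => sum_le_sum fun v _ => ?_
  by_cases hu : u ∈ A <;> by_cases hv : v ∈ A <;> simp only [Set.indicator_apply, mem_coe, hu,
    hv, if_true, if_false, Pi.one_apply, sub_self, mul_zero, zero_mul, le_refl]
  · have := hA u hu v hv
    nlinarith [(k u v).cast_nonneg (α := ℤ)]
  · have := hA v hv u hu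
    nlinarith [(k u v).cast_nonneg (α := ℤ)]

end Cuts

section Balanced

variable {V : Type} [Fintype V] [DecidableEq V] {k : V → V → ℕ} {w : V → ℕ} {D : ℤ}

lemma mA_add_mA_compl (hsym : ∀ u v, k u v = k v u) (hg : 1 < genus k w) (A : Finset V) :
    mA k w D A + mA k w D Aᶜ = D - deltaA k A := by
  have hw : wA k w A + wA k w Aᶜ = 2 * genus k w - 2 := by
    rw [← wA_univ hsym w, wA, wA, wA, sum_add_sum_compl]
  have ht : ((2 * genus k w - 2 : ℤ) : ℚ) ≠ 0 := by
    exact_mod_cast (by omega : (2 * genus k w - 2 : ℤ) ≠ 0)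
  rw [mA, mA, deltaA_compl hsym, ← hw]
  rw [← hw] at ht
  field_simp
  push_cast
  ring

variable (k w D) in
/-- `2(2g - 2)(m_A - d_A)`, an integer. -/
def excess (d : V → ℤ) (A : Finset V) : ℤ :=
  2 * D * wA k w A - (2 * genus k w - 2) * (deltaA k A + 2 * degA d A)

lemma mA_le_degA_iff (hg : 1 < genus k w) (d : V → ℤ) (A : Finset V) :
    mA k w D A ≤ degA d A ↔ excess k w D d A ≤ 0 := by
  have ht : (0 : ℚ) < ((2 * genus k w - 2 : ℤ) : ℚ) := by
    exact_mod_cast (by omega : (0 : ℤ) < 2 * genus k w - 2)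
  have h : mA k w D A - degA d A =
      (excess k w D d A : ℚ) / (2 * ((2 * genus k w - 2 : ℤ) : ℚ)) := by
    rw [mA, excess]
    field_simp
    push_cast
    ring
  rw [← sub_nonpos, h, div_le_iff₀ (by positivity), zero_mul, Int.cast_nonpos]

lemma isBalanced_iff (hg : 1 < genus k w) (d : V → ℤ) :
    IsBalanced k w D d ↔ degA d univ = D ∧ ∀ A, excess k w D d A ≤ 0 := by
  simp_rw [IsBalanced, mA_le_degA_iff hg]

lemma excess_empty (d : V → ℤ) : excess k w D d ∅ = 0 := by
  simp [excess, wA, deltaA, degA]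

lemma excess_univ (hsym : ∀ u v, k u v = k v u) {d : V → ℤ} (hd : degA d univ = D) :
    excess k w D d univ = 0 := by
  rw [excess, wA_univ hsym, deltaA_univ, hd]
  ring

lemma degA_sub_laplacian (d n : V → ℤ) (B : Finset V) :
    degA (d - laplacian k n) B = degA d B - ∑ u ∈ B, laplacian k n u := by
  simp [degA, sum_sub_distrib]

lemma excess_sub_laplacian_le (hsym : ∀ u v, k u v = k v u) (hg : 1 ≤ genus k w)
    (d : V → ℤ) (A B : Finset V) :
    excess k w D (d - laplacian k ((A : Set V).indicator 1)) B ≤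
      excess k w D d (A ∪ B) + excess k w D d (A ∩ B) - excess k w D d A := by
  have hw : wA k w (A ∪ B) + wA k w (A ∩ B) = wA k w A + wA k w B := sum_union_inter
  have hd : degA d (A ∪ B) + degA d (A ∩ B) = degA d A + degA d B := sum_union_inter
  have ht : (0 : ℤ) ≤ 2 * genus k w - 2 := by omega
  have := mul_le_mul_of_nonneg_left (deltaA_union_add_deltaA_inter_add_sum_laplacian_le hsym A B) ht
  have := congrArg (2 * D * ·) hw
  have := congrArg ((2 * genus k w - 2) * ·) hd
  simp only [excess, degA_sub_laplacian]
  linarith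

lemma excess_sub_laplacian_self (hsym : ∀ u v, k u v = k v u) (d : V → ℤ) (A : Finset V) :
    excess k w D (d - laplacian k ((A : Set V).indicator 1)) A =
      excess k w D d A - 2 * (2 * genus k w - 2) * deltaA k A := by
  have h := two_mul_sum_laplacian hsym ((A : Set V).indicator 1) A
  rw [← two_mul_deltaA hsym] at h
  simp only [excess, degA_sub_laplacian]
  linear_combination (2 * genus k w - 2) * h

variable (k w D) in
/-- Orders the sets lexicographically by excess, then by cardinality. -/
def excessKey (d : V → ℤ) (A : Finset V) : ℤ :=
  excess k w D d A * (Fintype.card V + 1) + A.card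

lemma card_eq_excessKey_emod (d : V → ℤ) (A : Finset V) :
    (A.card : ℤ) = excessKey k w D d A % (Fintype.card V + 1) := by
  have := card_le_univ A
  rw [excessKey, add_comm, Int.add_mul_emod_self_right,
    Int.emod_eq_of_lt (by positivity) (by omega)]

lemma excessKey_sub_laplacian_lt (hsym : ∀ u v, k u v = k v u) (hg : 1 < genus k w)
    {d : V → ℤ} {A : Finset V} (hA : ∀ X, excessKey k w D d X ≤ excessKey k w D d A)
    (hδ : 0 < deltaA k A) (B : Finset V) :
    excessKey k w D (d - laplacian k ((A : Set V).indicator 1)) B < excessKey k w D d A := by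
  have hN : (0 : ℤ) < Fintype.card V + 1 := by positivity
  by_cases hBA : B = A
  · subst hBA
    have : 0 < 2 * (2 * genus k w - 2) * deltaA k B * (Fintype.card V + 1) := by
      have : (0 : ℤ) < 2 * genus k w - 2 := by omega
      positivity
    rw [excessKey, excessKey, excess_sub_laplacian_self hsym]
    linarith
  have hcard : (B.card : ℤ) = (A ∪ B).card + (A ∩ B).card - A.card := by
    have := card_union_add_card_inter A B
    omega
  have hle : excessKey k w D (d - laplacian k ((A : Set V).indicator 1)) B ≤
      excessKey k w D d (A ∪ B) + excessKey k w D d (A ∩ B) - excessKey k w D d A := by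
    have := mul_le_mul_of_nonneg_right (excess_sub_laplacian_le (D := D) hsym hg.le d A B) hN.le
    simp only [excessKey, hcard]
    linarith
  by_contra! hge
  have hU : excessKey k w D d (A ∪ B) = excessKey k w D d A := by
    linarith [hA (A ∪ B), hA (A ∩ B)]
  have hI : excessKey k w D d (A ∩ B) = excessKey k w D d A := by
    linarith [hA (A ∪ B), hA (A ∩ B)]
  have hU' := congrArg (· % (Fintype.card V + 1 : ℤ)) hU
  have hI' := congrArg (· % (Fintype.card V + 1 : ℤ)) hI
  simp only [← card_eq_excessKey_emod, Nat.cast_inj] at hU' hI'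
  have hBA' : B ⊆ A :=
    union_eq_left.mp (eq_of_subset_of_card_le subset_union_left hU'.le).symm
  have hAB : A ⊆ B := inter_eq_left.mp (eq_of_subset_of_card_le inter_subset_left hI'.ge)
  exact hBA (hBA'.antisymm hAB)

lemma exists_isBalanced_sub_mem_Lambda (hsym : ∀ u v, k u v = k v u)
    (hconn : (graphOf k).Connected) (hg : 1 < genus k w) {d : V → ℤ} (hd : degA d univ = D) :
    ∃ d', IsBalanced k w D d' ∧ d' - d ∈ Lambda k := by
  obtain ⟨A₀, -, hA₀⟩ := exists_max_image univ (excessKey k w D d) univ_nonempty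
  suffices h : ∀ n : ℕ, ∀ d : V → ℤ, degA d univ = D → (∀ X, excessKey k w D d X < n) →
      ∃ d', IsBalanced k w D d' ∧ d' - d ∈ Lambda k from
    h ((excessKey k w D d A₀).toNat + 1) d hd fun X =>
      (hA₀ X (mem_univ X)).trans_lt (by have := Int.self_le_toNat (excessKey k w D d A₀); omega)
  intro n
  induction n with
  | zero => exact fun d _ h => absurd (h ∅) (by simp [excessKey, excess_empty])
  | succ n ih =>
    intro d hd hn
    by_cases hbal : ∀ X, excess k w D d X ≤ 0
    · exact ⟨d, (isBalanced_iff hg d).mpr ⟨hd, hbal⟩, by simp⟩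
    obtain ⟨X, hX⟩ := not_forall.mp hbal
    obtain ⟨A, -, hA⟩ := exists_max_image univ (excessKey k w D d) univ_nonempty
    have hXA : Fintype.card V < excessKey k w D d A := by
      have := hA X (mem_univ X)
      have : (Fintype.card V + 1 : ℤ) ≤ excess k w D d X * (Fintype.card V + 1) :=
        le_mul_of_one_le_left (by positivity) (by omega)
      simp only [excessKey] at *
      omega
    have hA0 : A.Nonempty := by
      rw [nonempty_iff_ne_empty]
      rintro rfl
      rw [excessKey, excess_empty, card_empty] at hXA
      omega
    have hAuniv : A ≠ univ := by
      rintro rfl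
      rw [excessKey, excess_univ hsym hd, card_univ] at hXA
      omega
    obtain ⟨d', hd', hmem⟩ := ih (d - laplacian k ((A : Set V).indicator 1))
      (by rw [degA_sub_laplacian, sum_laplacian, hd, sub_zero]) fun B => by
        have := excessKey_sub_laplacian_lt hsym hg (fun X => hA X (mem_univ X))
          (deltaA_pos hsym hconn hA0 hAuniv) B
        have := hn A
        omega
    refine ⟨d', hd', ?_⟩
    convert add_mem hmem (neg_mem (laplacian_mem_Lambda k ((A : Set V).indicator 1))) using 1
    abel

lemma eq_of_isBalanced_of_isStrictlyBalanced (hsym : ∀ u v, k u v = k v u)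
    (hg : 1 < genus k w) {d d' : V → ℤ} (hd : IsBalanced k w D d)
    (hd' : IsStrictlyBalanced k w D d') (hdd' : d - d' ∈ Lambda k) : d = d' := by
  obtain ⟨n, hn⟩ := exists_laplacian_eq_of_mem_Lambda k hdd'
  set A := univ.filter fun v => ∀ u, n u ≤ n v
  by_cases hA : A = univ
  · have hmax : ∀ v, ∀ u, n u ≤ n v := fun v => by
      have hv : v ∈ A := hA ▸ mem_univ v
      simpa [A] using hv
    have : laplacian k n = 0 := funext fun u => by
      simp [laplacian_apply hsym, le_antisymm (hmax u _) (hmax _ u)]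
    rw [← sub_eq_zero, ← hn, this]
  obtain ⟨b, hb⟩ : ∃ b, b ∉ A := by simpa [eq_univ_iff_forall] using hA
  obtain ⟨a, -, ha⟩ := exists_max_image univ n ⟨b, mem_univ b⟩
  have hAne : A ≠ ∅ := ne_empty_of_mem (a := a) (by simpa [A] using fun u => ha u (mem_univ u))
  have hsep : ∀ u ∈ A, ∀ v ∉ A, n v < n u := by
    intro u hu v hv
    simp only [A, mem_filter, mem_univ, true_and, not_forall, not_le] at hu hv
    obtain ⟨x, hx⟩ := hv
    exact hx.trans_le (hu x)
  have hlap : degA d A - degA d' A ≤ -deltaA k A := by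
    have h := sum_laplacian_le_neg_deltaA hsym hsep
    rw [hn] at h
    simpa only [degA, Pi.sub_apply, sum_sub_distrib] using h
  have hsplit : degA d' A + degA d' Aᶜ = D := by
    rw [degA, degA, sum_add_sum_compl]
    exact hd'.1.1
  have hbal := hd.2 A
  have hstrict := hd'.2 Aᶜ (by simpa using hA) (by simpa using hAne)
  have hm := mA_add_mA_compl (D := D) hsym hg A
  have hlapQ : (degA d A : ℚ) - degA d' A ≤ -deltaA k A := by exact_mod_cast hlap
  have hsplitQ : (degA d' A : ℚ) + degA d' Aᶜ = D := by exact_mod_cast hsplit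
  linarith

variable (k w D) in
lemma setOf_isBalanced_finite : {d : V → ℤ | IsBalanced k w D d}.Finite := by
  refine (Set.Finite.pi fun v => Set.finite_Icc ⌈mA k w D {v}⌉ ⌊D - mA k w D {v}ᶜ⌋).subset ?_
  intro d hd v _
  have hv := hd.2 {v}
  have hvc := hd.2 {v}ᶜ
  have hsplit : degA d {v} + degA d {v}ᶜ = D := by
    rw [degA, degA, sum_add_sum_compl]
    exact hd.1
  rw [degA, sum_singleton] at hv hsplit
  have hsplitQ : (d v : ℚ) + degA d {v}ᶜ = D := by exact_mod_cast hsplit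
  exact ⟨Int.ceil_le.mpr hv, Int.le_floor.mpr (by linarith)⟩

end Balanced

variable {V : Type} [Fintype V] [DecidableEq V] in
def degreeClassEquiv (k : V → V → ℕ) {D : ℤ} (d₀ : V → ℤ) (hd₀ : ∑ v, d₀ v = D) :
    Quotient (degSetoid k D) ≃ ↥(Zsub V) ⧸ (Lambda k).addSubgroupOf (Zsub V) :=
  Quotient.congr
    { toFun := fun d => ⟨d - d₀, by simp [Zsub, sumHom, sum_sub_distrib, d.2, hd₀]⟩
      invFun := fun z => ⟨z + d₀, by
        have : ∑ v, (z : V → ℤ) v = 0 := z.2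
        simp [sum_add_distrib, this, hd₀]⟩
      left_inv := fun d => by simp
      right_inv := fun z => by simp }
    fun a b => by
      rw [QuotientAddGroup.leftRel_apply, AddSubgroup.mem_addSubgroupOf]
      show _ ↔ -((a : V → ℤ) - d₀) + ((b : V → ℤ) - d₀) ∈ Lambda k
      rw [show -((a : V → ℤ) - d₀) + ((b : V → ℤ) - d₀) = -((a : V → ℤ) - b) by abel,
        neg_mem_iff]
      rfl

/-- `B_d` and `B̄_d` are finite, `Δ^d` has the same finite
cardinality as the degree class group `Δ = Z/Λ`, and
`#B_d ≤ #Δ ≤ #B̄_d`. -/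
theorem stmt4 (V : Type) [Fintype V] [DecidableEq V] (k : V → V → ℕ) (w : V → ℕ)
    (hsym : ∀ u v, k u v = k v u) (hstab : IsStable k w) (hg : 2 ≤ genus k w)
    (D : ℤ) :
    {d : V → ℤ | IsBalanced k w D d}.Finite ∧
    {d : V → ℤ | IsStrictlyBalanced k w D d}.Finite ∧
    Finite (Quotient (degSetoid k D)) ∧
    Finite (↥(Zsub V) ⧸ (Lambda k).addSubgroupOf (Zsub V)) ∧
    Nat.card (Quotient (degSetoid k D)) =
      Nat.card (↥(Zsub V) ⧸ (Lambda k).addSubgroupOf (Zsub V)) ∧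
    Nat.card {d : V → ℤ | IsStrictlyBalanced k w D d} ≤
      Nat.card (Quotient (degSetoid k D)) ∧
    Nat.card (Quotient (degSetoid k D)) ≤
      Nat.card {d : V → ℤ | IsBalanced k w D d} := by
  have hg' : 1 < genus k w := by omega
  obtain ⟨v₀⟩ := hstab.1.nonempty
  have hB := setOf_isBalanced_finite k w D
  have hsurj : Function.Surjective fun d : {d | IsBalanced k w D d} =>
      Quotient.mk (degSetoid k D) ⟨d, d.2.1⟩ := by
    rintro ⟨d, hd⟩
    obtain ⟨d', hd', hmem⟩ := exists_isBalanced_sub_mem_Lambda hsym hstab.1 hg' hd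
    exact ⟨⟨d', hd'⟩, Quotient.sound hmem⟩
  have hinj : Function.Injective fun d : {d | IsStrictlyBalanced k w D d} =>
      Quotient.mk (degSetoid k D) ⟨d, d.2.1.1⟩ := fun d d' h =>
    Subtype.ext (eq_of_isBalanced_of_isStrictlyBalanced hsym hg' d.2.1 d'.2 (Quotient.exact h))
  have := hB.to_subtype
  have : Finite (Quotient (degSetoid k D)) := .of_surjective _ hsurj
  let e := degreeClassEquiv (D := D) k (Pi.single v₀ D) (by simp)
  exact ⟨hB, hB.subset fun d hd => hd.1, this, .of_equiv _ e, Nat.card_congr e,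
    Nat.card_le_card_of_injective _ hinj, Nat.card_le_card_of_surjective _ hsurj⟩
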